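/- arXiv:2411.09900 — 7 statements merged into one kernel-verified Lean document; each statement's English description precedes it below -/
import Mathlib

section
/- Let n ≥ 2, let u be the uniform probability vector on Fin n, and let p be a probability vector obtained by moving from u toward the vertex at index 0, i.e. p 0 = x with 1/n ≤ x ≤ 1 and p i = (1 − x)/(n − 1) for all i ≠ 0. If D₂(p‖u) = σ₂, then the total variation distance satisfies D_TV(p, u) = √((n−1)(σ₂−1))/n. -/
/-- Moving from the uniform vector `u i = 1/n` toward the vertex at index 0 with
`p 0 = x`, `1/n ≤ x ≤ 1`, `p i = (1−x)/(n−1)` for `i ≠ 0`: if `D₂(p‖u) = σ₂`,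
then `D_TV(p, u) = √((n−1)(σ₂−1))/n`. -/
theorem tv_of_renyi2_toward_vertex (n : ℕ) (hn : 2 ≤ n)
    (x σ₂ : ℝ) (hx0 : (1 : ℝ) / n ≤ x) (hx1 : x ≤ 1)
    (p : Fin n → ℝ)
    (hp0 : ∀ i : Fin n, (i : ℕ) = 0 → p i = x)
    (hpi : ∀ i : Fin n, (i : ℕ) ≠ 0 → p i = (1 - x) / ((n : ℝ) - 1))
    (hD2 : ∑ i, (p i) ^ 2 / ((1 : ℝ) / n) = σ₂) :
    (1 / 2) * ∑ i, |p i - (1 : ℝ) / n| =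
      Real.sqrt (((n : ℝ) - 1) * (σ₂ - 1)) / n := by
  have hn2 : (2:ℝ) ≤ n := by exact_mod_cast hn
  have hnpos : (0:ℝ) < n := by linarith
  have hn1 : (0:ℝ) < (n:ℝ) - 1 := by linarith
  have hnx : 1 ≤ (n:ℝ) * x := by
    rw [div_le_iff₀ hnpos] at hx0; linarith
  set i0 : Fin n := ⟨0, by omega⟩ with hi0
  have hmem : i0 ∈ Finset.univ := Finset.mem_univ _
  have hsplit : ∀ f : Fin n → ℝ,
      ∑ i, f i = f i0 + ∑ i ∈ Finset.univ.erase i0, f i := by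
    intro f
    rw [← Finset.add_sum_erase _ f hmem]
  have hcard : (Finset.univ.erase i0).card = n - 1 := by
    rw [Finset.card_erase_of_mem hmem, Finset.card_univ, Fintype.card_fin]
  have hcardR : ((Finset.univ.erase i0).card : ℝ) = (n:ℝ) - 1 := by
    rw [hcard]; push_cast [Nat.cast_sub (by omega : 1 ≤ n)]; ring
  have hne : ∀ i ∈ Finset.univ.erase i0, (i:ℕ) ≠ 0 := by
    intro i hi h
    exact Finset.ne_of_mem_erase hi (by ext; simpa using h)
  have hp0' : p i0 = x := hp0 i0 rfl
  -- compute σ₂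
  have hσ : σ₂ = x ^ 2 / ((1:ℝ)/n)
      + (((n:ℝ) - 1)) * (((1 - x)/((n:ℝ)-1)) ^ 2 / ((1:ℝ)/n)) := by
    rw [← hD2, hsplit (fun i => (p i) ^ 2 / ((1:ℝ)/n)), hp0']
    congr 1
    rw [Finset.sum_congr rfl (fun i hi => by rw [hpi i (hne i hi)]),
      Finset.sum_const, nsmul_eq_mul, hcardR]
  have hkey : ((n:ℝ) - 1) * (σ₂ - 1) = ((n:ℝ) * x - 1) ^ 2 := by
    rw [hσ]; field_simp; ring
  have hRHS : Real.sqrt (((n:ℝ) - 1) * (σ₂ - 1)) = (n:ℝ) * x - 1 := by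
    rw [hkey, Real.sqrt_sq (by linarith)]
  -- compute the TV sum
  have habs2 : |(1 - x)/((n:ℝ)-1) - 1/(n:ℝ)|
      = ((n:ℝ) * x - 1) / ((n:ℝ) * ((n:ℝ) - 1)) := by
    have hval : (1 - x)/((n:ℝ)-1) - 1/(n:ℝ)
        = -(((n:ℝ) * x - 1) / ((n:ℝ) * ((n:ℝ) - 1))) := by
      field_simp; ring
    rw [hval, abs_neg, abs_of_nonneg]
    exact div_nonneg (by linarith) (by positivity)
  have hLHS : ∑ i, |p i - (1:ℝ)/n|
      = (x - 1/(n:ℝ)) + ((n:ℝ) - 1) * (((n:ℝ) * x - 1) / ((n:ℝ) * ((n:ℝ) - 1))) := by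
    rw [hsplit (fun i => |p i - (1:ℝ)/n|), hp0', abs_of_nonneg (by
      have : (1:ℝ)/n ≤ x := hx0; linarith)]
    congr 1
    rw [Finset.sum_congr rfl (fun i hi => by rw [hpi i (hne i hi), habs2]),
      Finset.sum_const, nsmul_eq_mul, hcardR]
  rw [hLHS, hRHS]
  field_simp
  ring
end

section
/- Let n ≥ 2 and σ₂ > 1, and let d be the probability vector on Fin n with d 0 = 1/σ₂ and d i = (σ₂ − 1)/(σ₂ (n − 1)) for i ≠ 0. Let p be a probability vector of the form p 0 = x and p i = (1 − x)/(n − 1) for all i ≠ 0, with 0 ≤ x ≤ 1, such that D₂(p‖d) = σ₂. Then the total variation distance satisfies D_TV(p, d) = (σ₂ − 1)/σ₂. In particular, the point mass δ₀ at index 0 satisfies D₂(δ₀‖d) = σ₂ and D_TV(δ₀, d) = (σ₂ − 1)/σ₂. -/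
/-!
A representative `p` of `d` lives on the line `p 0 = x`, tail spread uniformly, on which both
divergences are functions of `x` alone: `D₂(p‖d) = σ₂` is equivalent to `(σ₂ x - 1)² = (σ₂ - 1)²`,
i.e. `|x - 1/σ₂| = (σ₂ - 1)/σ₂`, and the tail of `p - d` carries the same mass `|x - 1/σ₂|` as its
head, so `D_TV(p, d) = |x - 1/σ₂|`. The point mass `δ₀` is the representative with `x = 1`.
-/

theorem Fin.sum_eq_add_mul_of_eq_off_zero {n : ℕ} (hn : 1 ≤ n) (f : Fin n → ℝ) (a b : ℝ)
    (h0 : ∀ i : Fin n, (i : ℕ) = 0 → f i = a) (h : ∀ i : Fin n, (i : ℕ) ≠ 0 → f i = b) :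
    ∑ i, f i = a + ((n : ℝ) - 1) * b := by
  obtain ⟨m, rfl⟩ := Nat.exists_eq_add_one_of_ne_zero (by omega : n ≠ 0)
  rw [Fin.sum_univ_succ, h0 0 rfl, Finset.sum_congr rfl fun i _ => h i.succ (by simp)]
  simp

theorem abs_sub_inv_eq_of_renyi2_eq {σ x m : ℝ} (hσ : 1 < σ) (hm : 0 < m)
    (h : x ^ 2 / (1 / σ) + m * (((1 - x) / m) ^ 2 / ((σ - 1) / (σ * m))) = σ) :
    |x - 1 / σ| = (σ - 1) / σ := by
  have hσ0 : 0 < σ := by linarith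
  have key : (σ * x - 1) ^ 2 = (σ - 1) ^ 2 := by
    have : σ - 1 ≠ 0 := by linarith
    field_simp at h
    linear_combination σ * h
  rw [sub_div' hσ0.ne', abs_div, abs_of_pos hσ0, ← abs_of_pos (by linarith : 0 < σ - 1), mul_comm]
  exact congrArg (· / σ) ((sq_eq_sq_iff_abs_eq_abs _ _).mp key)

theorem abs_sub_add_mul_abs_div_sub_div {x a m : ℝ} (hm : 0 < m) :
    |x - a| + m * |(1 - x) / m - (1 - a) / m| = 2 * |x - a| := by
  rw [← sub_div, abs_div, abs_of_pos hm, mul_div_cancel₀ _ hm.ne', sub_sub_sub_cancel_left,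
    abs_sub_comm]
  ring

theorem tv_eq_of_renyi2_eq (n : ℕ) (hn : 2 ≤ n) (σ₂ x : ℝ) (hσ : 1 < σ₂) (d : Fin n → ℝ)
    (hd0 : ∀ i : Fin n, (i : ℕ) = 0 → d i = 1 / σ₂)
    (hdi : ∀ i : Fin n, (i : ℕ) ≠ 0 → d i = (σ₂ - 1) / (σ₂ * ((n : ℝ) - 1)))
    (p : Fin n → ℝ)
    (hp0 : ∀ i : Fin n, (i : ℕ) = 0 → p i = x)
    (hpi : ∀ i : Fin n, (i : ℕ) ≠ 0 → p i = (1 - x) / ((n : ℝ) - 1))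
    (hD2 : ∑ i, (p i) ^ 2 / d i = σ₂) :
    (1 / 2) * ∑ i, |p i - d i| = (σ₂ - 1) / σ₂ := by
  have hn1 : 1 ≤ n := by omega
  have hm : (0 : ℝ) < n - 1 := by
    have : (2 : ℝ) ≤ n := by exact_mod_cast hn
    linarith
  have hσ0 : σ₂ ≠ 0 := by positivity
  rw [Fin.sum_eq_add_mul_of_eq_off_zero hn1 _ _ _ (fun i h => by rw [hp0 i h, hd0 i h])
    (fun i h => by rw [hpi i h, hdi i h])] at hD2
  rw [Fin.sum_eq_add_mul_of_eq_off_zero hn1 _ _ _ (fun i h => by rw [hp0 i h, hd0 i h])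
    (fun i h => by rw [hpi i h, hdi i h, ← div_div, ← one_sub_div hσ0]),
    abs_sub_add_mul_abs_div_sub_div hm, abs_sub_inv_eq_of_renyi2_eq hσ hm hD2]
  ring

theorem tv_of_renyi2_from_representative_general (n : ℕ) (hn : 2 ≤ n)
    (σ₂ x : ℝ) (hσ : 1 < σ₂)
    (d : Fin n → ℝ)
    (hd0 : ∀ i : Fin n, (i : ℕ) = 0 → d i = 1 / σ₂)
    (hdi : ∀ i : Fin n, (i : ℕ) ≠ 0 → d i = (σ₂ - 1) / (σ₂ * ((n : ℝ) - 1)))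
    (p : Fin n → ℝ)
    (hp0 : ∀ i : Fin n, (i : ℕ) = 0 → p i = x)
    (hpi : ∀ i : Fin n, (i : ℕ) ≠ 0 → p i = (1 - x) / ((n : ℝ) - 1))
    (hD2 : ∑ i, (p i) ^ 2 / d i = σ₂) :
    (1 / 2) * ∑ i, |p i - d i| = (σ₂ - 1) / σ₂ ∧
    (∑ i : Fin n, (if (i : ℕ) = 0 then (1 : ℝ) else 0) ^ 2 / d i = σ₂) ∧
    (1 / 2) * ∑ i : Fin n, |(if (i : ℕ) = 0 then (1 : ℝ) else 0) - d i| = (σ₂ - 1) / σ₂ := by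
  have hδ0 : ∀ i : Fin n, (i : ℕ) = 0 → (if (i : ℕ) = 0 then (1 : ℝ) else 0) = 1 :=
    fun _ h => if_pos h
  have hδi : ∀ i : Fin n, (i : ℕ) ≠ 0 →
      (if (i : ℕ) = 0 then (1 : ℝ) else 0) = (1 - 1) / ((n : ℝ) - 1) := by
    intro i h
    simp [h]
  have hδD2 : ∑ i : Fin n, (if (i : ℕ) = 0 then (1 : ℝ) else 0) ^ 2 / d i = σ₂ := by
    rw [Fin.sum_eq_add_mul_of_eq_off_zero (by omega) _ σ₂ 0
      (fun i h => by rw [hδ0 i h, hd0 i h]; simp) (fun i h => by simp [h])]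
    ring
  exact ⟨tv_eq_of_renyi2_eq n hn σ₂ x hσ d hd0 hdi p hp0 hpi hD2, hδD2,
    tv_eq_of_renyi2_eq n hn σ₂ 1 hσ d hd0 hdi _ hδ0 hδi hδD2⟩

/-- Let `d 0 = 1/σ₂`, `d i = (σ₂−1)/(σ₂(n−1))` for `i ≠ 0`, and let `p` be a
probability vector with `p 0 = x`, `p i = (1−x)/(n−1)` for `i ≠ 0`, `0 ≤ x ≤ 1`,
such that `D₂(p‖d) = σ₂`. Then `D_TV(p, d) = (σ₂−1)/σ₂`; in particular the point
mass `δ₀` at index 0 satisfies `D₂(δ₀‖d) = σ₂` and `D_TV(δ₀, d) = (σ₂−1)/σ₂`. -/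
theorem tv_of_renyi2_from_representative (n : ℕ) (hn : 2 ≤ n)
    (σ₂ x : ℝ) (hσ : 1 < σ₂) (hx0 : 0 ≤ x) (hx1 : x ≤ 1)
    (d : Fin n → ℝ)
    (hd0 : ∀ i : Fin n, (i : ℕ) = 0 → d i = 1 / σ₂)
    (hdi : ∀ i : Fin n, (i : ℕ) ≠ 0 → d i = (σ₂ - 1) / (σ₂ * ((n : ℝ) - 1)))
    (p : Fin n → ℝ)
    (hp0 : ∀ i : Fin n, (i : ℕ) = 0 → p i = x)
    (hpi : ∀ i : Fin n, (i : ℕ) ≠ 0 → p i = (1 - x) / ((n : ℝ) - 1))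
    (hD2 : ∑ i, (p i) ^ 2 / d i = σ₂) :
    (1 / 2) * ∑ i, |p i - d i| = (σ₂ - 1) / σ₂ ∧
    (∑ i : Fin n, (if (i : ℕ) = 0 then (1 : ℝ) else 0) ^ 2 / d i = σ₂) ∧
    (1 / 2) * ∑ i : Fin n, |(if (i : ℕ) = 0 then (1 : ℝ) else 0) - d i| = (σ₂ - 1) / σ₂ :=
  tv_of_renyi2_from_representative_general n hn σ₂ x hσ d hd0 hdi p hp0 hpi hD2
end

section
/- Let n ≥ 3 and σ₂ > 1, and let d be the probability vector on Fin n with d 0 = 1/σ₂ and d i = (σ₂ − 1)/(σ₂ (n − 1)) for i ≠ 0. Let p be a probability vector of the form p 0 = 1/σ₂, p 1 = y, and p i = (1 − 1/σ₂ − y)/(n − 2) for all i ≥ 2. If D₂(p‖d) = σ₂, then y = (σ₂ − 1)/(σ₂ (n − 1)) + (σ₂ − 1)√(n − 2)/(√σ₂ · (n − 1)) or y = (σ₂ − 1)/(σ₂ (n − 1)) − (σ₂ − 1)√(n − 2)/(√σ₂ · (n − 1)). -/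
/-!
Once `p 0 = d 0`, the constraint `D₂(p‖d) = σ₂` is a quadratic equation in `y`. Completing the
square around `y = d 1` (where `p = d`) gives `(y - d 1)² = (σ₂ - 1)² (n - 2) / (σ₂ (n - 1)²)`,
whose two roots are the claimed values.
-/

open Finset Real

theorem Fin.sum_eq_add_add_nsmul_of_const {M : Type*} [AddCommMonoid M] {m : ℕ}
    (f : Fin (m + 2) → M) (c : M) (hc : ∀ i : Fin (m + 2), 2 ≤ (i : ℕ) → f i = c) :
    ∑ i, f i = f 0 + f 1 + m • c := by
  rw [Fin.sum_univ_succ, Fin.sum_univ_succ, ← add_assoc]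
  simp [hc]

theorem sq_sub_eq_of_renyi2_eq {σ n y : ℝ} (hσ : 1 < σ) (hn : 2 < n)
    (h : (1 / σ) ^ 2 / (1 / σ) + y ^ 2 / ((σ - 1) / (σ * (n - 1)))
      + (n - 2) * (((1 - 1 / σ - y) / (n - 2)) ^ 2 / ((σ - 1) / (σ * (n - 1)))) = σ) :
    (y - (σ - 1) / (σ * (n - 1))) ^ 2 = (σ - 1) ^ 2 * (n - 2) / (σ * (n - 1) ^ 2) := by
  have hσ0 : σ ≠ 0 := by positivity
  have hσ1 : σ - 1 ≠ 0 := by linarith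
  have hn1 : n - 1 ≠ 0 := by linarith
  have hn2 : n - 2 ≠ 0 := by linarith
  field_simp at h ⊢
  linear_combination h

theorem eq_add_or_eq_sub_of_sq_sub_eq_sq {R : Type*} [CommRing R] [NoZeroDivisors R] {y a b : R}
    (h : (y - a) ^ 2 = b ^ 2) : y = a + b ∨ y = a - b := by
  rcases sq_eq_sq_iff_eq_or_eq_neg.mp h with h | h
  · exact .inl (by linear_combination h)
  · exact .inr (by linear_combination h)

theorem renyi2_fixed_first_solutions_general (n : ℕ) (hn : 3 ≤ n)
    (σ₂ y : ℝ) (hσ : 1 < σ₂)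
    (d : Fin n → ℝ)
    (hd0 : ∀ i : Fin n, (i : ℕ) = 0 → d i = 1 / σ₂)
    (hdi : ∀ i : Fin n, (i : ℕ) ≠ 0 → d i = (σ₂ - 1) / (σ₂ * ((n : ℝ) - 1)))
    (p : Fin n → ℝ)
    (hp0 : ∀ i : Fin n, (i : ℕ) = 0 → p i = 1 / σ₂)
    (hp1 : ∀ i : Fin n, (i : ℕ) = 1 → p i = y)
    (hpi : ∀ i : Fin n, 2 ≤ (i : ℕ) → p i = (1 - 1 / σ₂ - y) / ((n : ℝ) - 2))
    (hD2 : ∑ i, (p i) ^ 2 / d i = σ₂) :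
    y = (σ₂ - 1) / (σ₂ * ((n : ℝ) - 1))
          + (σ₂ - 1) * Real.sqrt ((n : ℝ) - 2) / (Real.sqrt σ₂ * ((n : ℝ) - 1)) ∨
    y = (σ₂ - 1) / (σ₂ * ((n : ℝ) - 1))
          - (σ₂ - 1) * Real.sqrt ((n : ℝ) - 2) / (Real.sqrt σ₂ * ((n : ℝ) - 1)) := by
  obtain ⟨m, rfl⟩ : ∃ m, n = m + 2 := ⟨n - 2, by omega⟩
  have hm : (m : ℝ) = ((m + 2 : ℕ) : ℝ) - 2 := by push_cast; ring
  have hn' : (2 : ℝ) < (m + 2 : ℕ) := by exact_mod_cast (by omega : 2 < m + 2)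
  have hsum := Fin.sum_eq_add_add_nsmul_of_const (fun i ↦ p i ^ 2 / d i) _
    fun i hi ↦ by rw [hpi i hi, hdi i (by omega)]
  rw [hD2, hp0 0 rfl, hd0 0 rfl, hp1 1 (by simp), hdi 1 (by simp), nsmul_eq_mul, hm] at hsum
  apply eq_add_or_eq_sub_of_sq_sub_eq_sq
  rw [sq_sub_eq_of_renyi2_eq hσ hn' hsum.symm, div_pow, mul_pow, mul_pow,
    sq_sqrt (by linarith), sq_sqrt (by linarith)]

/-- Let `n ≥ 3`, `σ₂ > 1`, `d 0 = 1/σ₂` and `d i = (σ₂−1)/(σ₂(n−1))` for `i ≠ 0`.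
If `p` is a probability vector with `p 0 = 1/σ₂`, `p 1 = y`, and
`p i = (1 − 1/σ₂ − y)/(n−2)` for `i ≥ 2`, and `D₂(p‖d) = σ₂`, then
`y = (σ₂−1)/(σ₂(n−1)) ± (σ₂−1)√(n−2)/(√σ₂·(n−1))`. -/
theorem renyi2_fixed_first_solutions (n : ℕ) (hn : 3 ≤ n)
    (σ₂ y : ℝ) (hσ : 1 < σ₂)
    (d : Fin n → ℝ)
    (hd0 : ∀ i : Fin n, (i : ℕ) = 0 → d i = 1 / σ₂)
    (hdi : ∀ i : Fin n, (i : ℕ) ≠ 0 → d i = (σ₂ - 1) / (σ₂ * ((n : ℝ) - 1)))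
    (p : Fin n → ℝ) (hp_nonneg : ∀ i, 0 ≤ p i) (hp_sum : ∑ i, p i = 1)
    (hp0 : ∀ i : Fin n, (i : ℕ) = 0 → p i = 1 / σ₂)
    (hp1 : ∀ i : Fin n, (i : ℕ) = 1 → p i = y)
    (hpi : ∀ i : Fin n, 2 ≤ (i : ℕ) → p i = (1 - 1 / σ₂ - y) / ((n : ℝ) - 2))
    (hD2 : ∑ i, (p i) ^ 2 / d i = σ₂) :
    y = (σ₂ - 1) / (σ₂ * ((n : ℝ) - 1))
          + (σ₂ - 1) * Real.sqrt ((n : ℝ) - 2) / (Real.sqrt σ₂ * ((n : ℝ) - 1)) ∨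
    y = (σ₂ - 1) / (σ₂ * ((n : ℝ) - 1))
          - (σ₂ - 1) * Real.sqrt ((n : ℝ) - 2) / (Real.sqrt σ₂ * ((n : ℝ) - 1)) :=
  renyi2_fixed_first_solutions_general n hn σ₂ y hσ d hd0 hdi p hp0 hp1 hpi hD2
end

section
/- Let n ≥ 3 and σ₂ > 1, and let d be the probability vector on Fin n with d 0 = 1/σ₂ and d i = (σ₂ − 1)/(σ₂ (n − 1)) for i ≠ 0. Let p be a probability vector of the form p 0 = 1/σ₂, p 1 = y, and p i = (1 − 1/σ₂ − y)/(n − 2) for all i ≥ 2, such that D₂(p‖d) = σ₂. Then the total variation distance satisfies D_TV(p, d) = (σ₂ − 1)√(n − 2)/(√σ₂ · (n − 1)). -/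
/-!
Write `e = p - d` and `c` for the common value of `d i`, `i ≠ 0`. Since both vectors sum to one,
`D₂(p‖d) = 1 + ∑ eᵢ² / dᵢ` (the χ² identity). The deviation `e` vanishes at `0`, is constant, say
`w`, on the indices `i ≥ 2`, and sums to zero, so `e 1 = -(n - 2) w`. Hence
`D₂(p‖d) - 1 = (n - 1)(n - 2) w² / c` and `2 D_TV(p, d) = 2 (n - 2) |w|`, and solving the first
equation for `w` gives the total variation distance.
-/

open Finset

theorem Fin.sum_eq_add_add_mul_of_two_le {R : Type*} [Ring R] {n : ℕ} (hn : 2 ≤ n)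
    {f : Fin n → R} {v : R} (hv : ∀ i : Fin n, 2 ≤ (i : ℕ) → f i = v) :
    ∑ i, f i = f ⟨0, by omega⟩ + f ⟨1, by omega⟩ + ((n : R) - 2) * v := by
  obtain ⟨m, rfl⟩ := Nat.exists_eq_add_of_le' hn
  have hv' : ∀ i : Fin m, f i.succ.succ = v := fun i => hv _ (by simp)
  simp [Fin.sum_univ_succ, hv', add_assoc]

theorem sum_sq_div_eq_one_add_sum_sub_sq_div {ι K : Type*} [Fintype ι] [Field K]
    {p q : ι → K} (hq : ∀ i, q i ≠ 0) (hp1 : ∑ i, p i = 1) (hq1 : ∑ i, q i = 1) :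
    ∑ i, p i ^ 2 / q i = 1 + ∑ i, (p i - q i) ^ 2 / q i := by
  have h : ∀ i, (p i - q i) ^ 2 / q i = p i ^ 2 / q i - 2 * p i + q i := fun i => by
    field_simp [hq i]; ring
  simp only [h, sum_add_distrib, sum_sub_distrib, ← mul_sum, hp1, hq1]
  ring

section

variable {n : ℕ} (hn : 2 ≤ n) {e : Fin n → ℝ} {w : ℝ}
  (h0 : e ⟨0, by omega⟩ = 0) (hw : ∀ i : Fin n, 2 ≤ (i : ℕ) → e i = w) (hsum : ∑ i, e i = 0)
include hn h0 hw hsum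

theorem eq_neg_mul_of_sum_eq_zero : e ⟨1, by omega⟩ = -(((n : ℝ) - 2) * w) := by
  rw [Fin.sum_eq_add_add_mul_of_two_le hn hw, h0] at hsum
  linarith

theorem sum_abs_eq_of_sum_eq_zero : ∑ i, |e i| = 2 * (((n : ℝ) - 2) * |w|) := by
  have hn' : (2 : ℝ) ≤ n := by exact_mod_cast hn
  rw [Fin.sum_eq_add_add_mul_of_two_le hn (fun i hi => by rw [hw i hi]), h0,
    eq_neg_mul_of_sum_eq_zero hn h0 hw hsum, abs_neg, abs_mul, abs_of_nonneg (sub_nonneg.2 hn')]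
  ring

theorem sum_sq_div_eq_of_sum_eq_zero {d : Fin n → ℝ} {c : ℝ}
    (hd : ∀ i : Fin n, (i : ℕ) ≠ 0 → d i = c) :
    ∑ i, e i ^ 2 / d i = ((n : ℝ) - 1) * ((n : ℝ) - 2) * w ^ 2 / c := by
  rw [Fin.sum_eq_add_add_mul_of_two_le hn (fun i hi => by rw [hw i hi, hd i (by omega)]), h0,
    eq_neg_mul_of_sum_eq_zero hn h0 hw hsum, hd ⟨1, by omega⟩ one_ne_zero]
  ring

end

theorem sum_eq_one_of_eq_inv_of_eq_div {n : ℕ} (hn : 2 ≤ n) {σ : ℝ} (hσ : σ ≠ 0)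
    {d : Fin n → ℝ} (hd0 : ∀ i : Fin n, (i : ℕ) = 0 → d i = 1 / σ)
    (hdi : ∀ i : Fin n, (i : ℕ) ≠ 0 → d i = (σ - 1) / (σ * ((n : ℝ) - 1))) :
    ∑ i, d i = 1 := by
  have hn1 : (n : ℝ) - 1 ≠ 0 := by
    have : (2 : ℝ) ≤ n := by exact_mod_cast hn
    linarith
  rw [Fin.sum_eq_add_add_mul_of_two_le hn (fun i hi => hdi i (by omega)), hd0 _ rfl,
    hdi _ one_ne_zero]
  field_simp
  ring

theorem sub_two_mul_abs_eq_of_mul_sq_div_eq {N σ w : ℝ} (hN : 2 < N) (hσ : 1 < σ)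
    (h : (N - 1) * (N - 2) * w ^ 2 / ((σ - 1) / (σ * (N - 1))) = σ - 1) :
    (N - 2) * |w| = (σ - 1) * √(N - 2) / (√σ * (N - 1)) := by
  have hσ1 : σ - 1 ≠ 0 := by linarith
  have hN1 : N - 1 ≠ 0 := by linarith
  rw [← sq_eq_sq₀ (mul_nonneg (by linarith) (abs_nonneg w))
      (div_nonneg (mul_nonneg (by linarith) (Real.sqrt_nonneg _))
        (mul_nonneg (Real.sqrt_nonneg _) (by linarith))),
    mul_pow, sq_abs, div_pow, mul_pow, mul_pow, Real.sq_sqrt (by linarith),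
    Real.sq_sqrt (by linarith)]
  field_simp at h ⊢
  linear_combination (N - 2) * h

theorem tv_of_renyi2_fixed_first_general (n : ℕ) (hn : 3 ≤ n)
    (σ₂ y : ℝ) (hσ : 1 < σ₂)
    (d : Fin n → ℝ)
    (hd0 : ∀ i : Fin n, (i : ℕ) = 0 → d i = 1 / σ₂)
    (hdi : ∀ i : Fin n, (i : ℕ) ≠ 0 → d i = (σ₂ - 1) / (σ₂ * ((n : ℝ) - 1)))
    (p : Fin n → ℝ) (hp_sum : ∑ i, p i = 1)
    (hp0 : ∀ i : Fin n, (i : ℕ) = 0 → p i = 1 / σ₂)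
    (hpi : ∀ i : Fin n, 2 ≤ (i : ℕ) → p i = (1 - 1 / σ₂ - y) / ((n : ℝ) - 2))
    (hD2 : ∑ i, (p i) ^ 2 / d i = σ₂) :
    (1 / 2) * ∑ i, |p i - d i| =
      (σ₂ - 1) * Real.sqrt ((n : ℝ) - 2) / (Real.sqrt σ₂ * ((n : ℝ) - 1)) := by
  have hn' : (3 : ℝ) ≤ n := by exact_mod_cast hn
  have hd_ne : ∀ i, d i ≠ 0 := fun i => by
    by_cases h : (i : ℕ) = 0
    · rw [hd0 i h]; positivity
    · rw [hdi i h]; exact (div_pos (by linarith) (by nlinarith)).ne'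
  have hd_sum : ∑ i, d i = 1 :=
    sum_eq_one_of_eq_inv_of_eq_div (by omega) (by positivity) hd0 hdi
  obtain ⟨w, hew⟩ : ∃ w, ∀ i : Fin n, 2 ≤ (i : ℕ) → p i - d i = w :=
    ⟨_, fun i hi => by rw [hpi i hi, hdi i (by omega)]⟩
  have he0 : p ⟨0, by omega⟩ - d ⟨0, by omega⟩ = 0 := by rw [hp0 _ rfl, hd0 _ rfl, sub_self]
  have he_sum : ∑ i, (p i - d i) = 0 := by rw [sum_sub_distrib, hp_sum, hd_sum, sub_self]
  have hw_sq : ((n : ℝ) - 1) * ((n : ℝ) - 2) * w ^ 2 / ((σ₂ - 1) / (σ₂ * ((n : ℝ) - 1))) =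
      σ₂ - 1 := by
    rw [← sum_sq_div_eq_of_sum_eq_zero (by omega) he0 hew he_sum hdi, ← hD2,
      sum_sq_div_eq_one_add_sum_sub_sq_div hd_ne hp_sum hd_sum]
    ring
  rw [sum_abs_eq_of_sum_eq_zero (by omega) he0 hew he_sum, ← mul_assoc,
    one_div_mul_cancel two_ne_zero, one_mul]
  exact sub_two_mul_abs_eq_of_mul_sq_div_eq (by linarith) hσ hw_sq

/-- Let `n ≥ 3`, `σ₂ > 1`, `d 0 = 1/σ₂` and `d i = (σ₂−1)/(σ₂(n−1))` for `i ≠ 0`.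
If `p` is a probability vector with `p 0 = 1/σ₂`, `p 1 = y`, and
`p i = (1 − 1/σ₂ − y)/(n−2)` for `i ≥ 2`, and `D₂(p‖d) = σ₂`, then
`D_TV(p, d) = (σ₂−1)√(n−2)/(√σ₂·(n−1))`. -/
theorem tv_of_renyi2_fixed_first (n : ℕ) (hn : 3 ≤ n)
    (σ₂ y : ℝ) (hσ : 1 < σ₂)
    (d : Fin n → ℝ)
    (hd0 : ∀ i : Fin n, (i : ℕ) = 0 → d i = 1 / σ₂)
    (hdi : ∀ i : Fin n, (i : ℕ) ≠ 0 → d i = (σ₂ - 1) / (σ₂ * ((n : ℝ) - 1)))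
    (p : Fin n → ℝ) (hp_nonneg : ∀ i, 0 ≤ p i) (hp_sum : ∑ i, p i = 1)
    (hp0 : ∀ i : Fin n, (i : ℕ) = 0 → p i = 1 / σ₂)
    (hp1 : ∀ i : Fin n, (i : ℕ) = 1 → p i = y)
    (hpi : ∀ i : Fin n, 2 ≤ (i : ℕ) → p i = (1 - 1 / σ₂ - y) / ((n : ℝ) - 2))
    (hD2 : ∑ i, (p i) ^ 2 / d i = σ₂) :
    (1 / 2) * ∑ i, |p i - d i| =
      (σ₂ - 1) * Real.sqrt ((n : ℝ) - 2) / (Real.sqrt σ₂ * ((n : ℝ) - 1)) :=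
  tv_of_renyi2_fixed_first_general n hn σ₂ y hσ d hd0 hdi p hp_sum hp0 hpi hD2
end

section
/- Let S and A be nonempty finite types, let γ ∈ (0,1), let μ : S → ℝ be a probability vector on S, let π : S → (A → ℝ) assign to each state a probability vector on A, and let P, P̂ : S × A → (S → ℝ) assign to each state-action pair probability vectors on S. Suppose d, d̂ : S × A → ℝ are nonnegative and satisfy the discounted flow equations d(s,a) = π(s)(a) · ((1−γ) μ(s) + γ ∑_{s',a'} d(s',a') · P(s',a')(s)) and d̂(s,a) = π(s)(a) · ((1−γ) μ(s) + γ ∑_{s',a'} d̂(s',a') · P̂(s',a')(s)) for all (s,a). Then (1/2) ∑_{s,a} |d̂(s,a) − d(s,a)| ≤ (γ/(1−γ)) · ∑_{s,a} d(s,a) · ∑_{s'} |P̂(s,a)(s') − P(s,a)(s')|. -/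
/-- Simulation lemma: if `d` and `d̂` are the γ-discounted state-action occupancy
distributions of the same policy `π` under transition kernels `P` and `P̂`, then
`D_TV(d̂, d) ≤ (γ/(1−γ)) · E_{(s,a)∼d}[‖P̂(·|s,a) − P(·|s,a)‖₁]`. -/
theorem occupancy_tv_le_transition_error
    (S A : Type*) [Fintype S] [Fintype A] [Nonempty S] [Nonempty A]
    (γ : ℝ) (hγ0 : 0 < γ) (hγ1 : γ < 1)
    (μ : S → ℝ) (hμ_nonneg : ∀ s, 0 ≤ μ s) (hμ_sum : ∑ s, μ s = 1)
    (π : S → A → ℝ) (hπ_nonneg : ∀ s a, 0 ≤ π s a) (hπ_sum : ∀ s, ∑ a, π s a = 1)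
    (P Phat : S × A → S → ℝ)
    (hP_nonneg : ∀ x s', 0 ≤ P x s') (hP_sum : ∀ x, ∑ s', P x s' = 1)
    (hPhat_nonneg : ∀ x s', 0 ≤ Phat x s') (hPhat_sum : ∀ x, ∑ s', Phat x s' = 1)
    (d dhat : S × A → ℝ)
    (hd_nonneg : ∀ x, 0 ≤ d x) (hdhat_nonneg : ∀ x, 0 ≤ dhat x)
    (hd_flow : ∀ s a,
      d (s, a) = π s a * ((1 - γ) * μ s + γ * ∑ x : S × A, d x * P x s))
    (hdhat_flow : ∀ s a,
      dhat (s, a) = π s a * ((1 - γ) * μ s + γ * ∑ x : S × A, dhat x * Phat x s)) :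
    (1 / 2) * ∑ x : S × A, |dhat x - d x| ≤
      (γ / (1 - γ)) * ∑ x : S × A, d x * ∑ s', |Phat x s' - P x s'| := by
  set E := ∑ x : S × A, |dhat x - d x| with hE
  set T := ∑ x : S × A, d x * ∑ s', |Phat x s' - P x s'| with hT
  have hE0 : 0 ≤ E := Finset.sum_nonneg fun x _ => abs_nonneg _
  -- pointwise bound
  have hbound : ∀ s a, |dhat (s, a) - d (s, a)| ≤
      π s a * (γ * ((∑ x : S × A, |dhat x - d x| * Phat x s) +
        ∑ x : S × A, d x * |Phat x s - P x s|)) := by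
    intro s a
    have h1 : dhat (s, a) - d (s, a) = π s a * (γ *
        ∑ x : S × A, ((dhat x - d x) * Phat x s + d x * (Phat x s - P x s))) := by
      rw [hd_flow, hdhat_flow, Finset.sum_add_distrib]
      have : ∑ x : S × A, (dhat x - d x) * Phat x s
          = (∑ x : S × A, dhat x * Phat x s) - ∑ x : S × A, dhat x * Phat x s
            + ∑ x : S × A, (dhat x - d x) * Phat x s := by ring
      rw [Finset.sum_congr rfl (fun x _ => by ring :
        ∀ x ∈ Finset.univ, (dhat x - d x) * Phat x s = dhat x * Phat x s - d x * P x s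
          - d x * (Phat x s - P x s)), Finset.sum_sub_distrib, Finset.sum_sub_distrib]
      ring
    rw [h1, abs_mul, abs_mul, abs_of_nonneg (hπ_nonneg s a), abs_of_nonneg hγ0.le]
    apply mul_le_mul_of_nonneg_left _ (hπ_nonneg s a)
    apply mul_le_mul_of_nonneg_left _ hγ0.le
    calc |∑ x : S × A, ((dhat x - d x) * Phat x s + d x * (Phat x s - P x s))|
        ≤ ∑ x : S × A, |(dhat x - d x) * Phat x s + d x * (Phat x s - P x s)| :=
          Finset.abs_sum_le_sum_abs _ _
      _ ≤ (∑ x : S × A, |dhat x - d x| * Phat x s) +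
            ∑ x : S × A, d x * |Phat x s - P x s| := by
          rw [← Finset.sum_add_distrib]
          refine Finset.sum_le_sum fun x _ => ?_
          calc |(dhat x - d x) * Phat x s + d x * (Phat x s - P x s)|
              ≤ |(dhat x - d x) * Phat x s| + |d x * (Phat x s - P x s)| := abs_add_le _ _
            _ = |dhat x - d x| * Phat x s + d x * |Phat x s - P x s| := by
                rw [abs_mul, abs_mul, abs_of_nonneg (hPhat_nonneg x s),
                  abs_of_nonneg (hd_nonneg x)]
  have key : E ≤ γ * (E + T) := by
    have : E ≤ ∑ s, γ * ((∑ x : S × A, |dhat x - d x| * Phat x s) +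
        ∑ x : S × A, d x * |Phat x s - P x s|) := by
      rw [hE, Fintype.sum_prod_type]
      refine Finset.sum_le_sum fun s _ => ?_
      calc ∑ a, |dhat (s, a) - d (s, a)|
          ≤ ∑ a, π s a * (γ * ((∑ x : S × A, |dhat x - d x| * Phat x s) +
              ∑ x : S × A, d x * |Phat x s - P x s|)) :=
            Finset.sum_le_sum fun a _ => hbound s a
        _ = _ := by rw [← Finset.sum_mul, hπ_sum, one_mul]
    refine this.trans_eq ?_
    rw [← Finset.mul_sum, Finset.sum_add_distrib]
    congr 1
    congr 1
    · rw [hE, Finset.sum_comm]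
      refine Finset.sum_congr rfl fun x _ => ?_
      rw [← Finset.mul_sum, hPhat_sum, mul_one]
    · rw [hT, Finset.sum_comm]
      exact Finset.sum_congr rfl fun x _ => by rw [← Finset.mul_sum]
  have h1γ : 0 < 1 - γ := by linarith
  have hEle : E ≤ γ / (1 - γ) * T := by
    rw [div_mul_eq_mul_div, le_div_iff₀ h1γ]
    nlinarith [key]
  nlinarith [hEle, hE0]
end

section
/- Let S and A be nonempty finite types, let γ ∈ (0,1) and ε ≥ 0, let μ : S → ℝ be a probability vector on S, let π : S → (A → ℝ) assign to each state a probability vector on A, and let P, P̂ : S × A → (S → ℝ) assign to each state-action pair probability vectors on S. Suppose d, d̂ : S × A → ℝ are nonnegative, satisfy ∑_{s,a} d(s,a) = 1, and satisfy the discounted flow equations d(s,a) = π(s)(a) · ((1−γ) μ(s) + γ ∑_{s',a'} d(s',a') · P(s',a')(s)) and d̂(s,a) = π(s)(a) · ((1−γ) μ(s) + γ ∑_{s',a'} d̂(s',a') · P̂(s',a')(s)) for all (s,a). If for every state-action pair (s,a) one has ∑_{s'} |P̂(s,a)(s') − P(s,a)(s')| ≤ ((1−γ)/γ) · ε, then (1/2)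 ∑_{s,a} |d̂(s,a) − d(s,a)| ≤ ε. -/
/-- If every transition-probability row is estimated to ℓ¹ accuracy `((1−γ)/γ)·ε`,
then the total variation distance between the true and estimated γ-discounted
state-action occupancy distributions is at most `ε`. -/
theorem occupancy_tv_le_of_rowwise_error
    (S A : Type*) [Fintype S] [Fintype A] [Nonempty S] [Nonempty A]
    (γ ε : ℝ) (hγ0 : 0 < γ) (hγ1 : γ < 1) (hε : 0 ≤ ε)
    (μ : S → ℝ) (hμ_nonneg : ∀ s, 0 ≤ μ s) (hμ_sum : ∑ s, μ s = 1)
    (π : S → A → ℝ) (hπ_nonneg : ∀ s a, 0 ≤ π s a) (hπ_sum : ∀ s, ∑ a, π s a = 1)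
    (P Phat : S × A → S → ℝ)
    (hP_nonneg : ∀ x s', 0 ≤ P x s') (hP_sum : ∀ x, ∑ s', P x s' = 1)
    (hPhat_nonneg : ∀ x s', 0 ≤ Phat x s') (hPhat_sum : ∀ x, ∑ s', Phat x s' = 1)
    (d dhat : S × A → ℝ)
    (hd_nonneg : ∀ x, 0 ≤ d x) (hdhat_nonneg : ∀ x, 0 ≤ dhat x)
    (hd_sum : ∑ x : S × A, d x = 1)
    (hd_flow : ∀ s a,
      d (s, a) = π s a * ((1 - γ) * μ s + γ * ∑ x : S × A, d x * P x s))
    (hdhat_flow : ∀ s a,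
      dhat (s, a) = π s a * ((1 - γ) * μ s + γ * ∑ x : S × A, dhat x * Phat x s))
    (hrow : ∀ x : S × A, ∑ s', |Phat x s' - P x s'| ≤ ((1 - γ) / γ) * ε) :
    (1 / 2) * ∑ x : S × A, |dhat x - d x| ≤ ε := by
  set E : S → ℝ := fun s =>
    (∑ x : S × A, dhat x * Phat x s) - ∑ x : S × A, d x * P x s with hE
  set Δ : ℝ := ∑ x : S × A, |dhat x - d x| with hΔ
  have habs : ∀ x : S × A, |dhat x - d x| = π x.1 x.2 * (γ * |E x.1|) := by
    rintro ⟨s, a⟩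
    have h1 : dhat (s, a) - d (s, a) = π s a * (γ * E s) := by
      rw [hdhat_flow, hd_flow]; simp only [hE]; ring
    rw [h1, abs_mul, abs_mul, abs_of_nonneg (hπ_nonneg s a), abs_of_nonneg hγ0.le]
  have hstep1 : Δ = γ * ∑ s, |E s| := by
    rw [hΔ]
    rw [Fintype.sum_prod_type]
    simp only [habs]
    rw [Finset.mul_sum]
    refine Finset.sum_congr rfl fun s _ => ?_
    rw [← Finset.sum_mul, hπ_sum s, one_mul]
  have hstep2 : ∀ s, |E s| ≤
      (∑ x : S × A, |dhat x - d x| * Phat x s) +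
      ∑ x : S × A, d x * |Phat x s - P x s| := by
    intro s
    have hdec : E s = (∑ x : S × A, (dhat x - d x) * Phat x s) +
        ∑ x : S × A, d x * (Phat x s - P x s) := by
      simp only [hE]
      rw [← Finset.sum_sub_distrib, ← Finset.sum_add_distrib]
      exact Finset.sum_congr rfl fun x _ => by ring
    rw [hdec]
    refine (abs_add_le _ _).trans (add_le_add ?_ ?_)
    · refine (Finset.abs_sum_le_sum_abs _ _).trans (le_of_eq ?_)
      refine Finset.sum_congr rfl fun x _ => ?_
      rw [abs_mul, abs_of_nonneg (hPhat_nonneg x s)]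
    · refine (Finset.abs_sum_le_sum_abs _ _).trans (le_of_eq ?_)
      refine Finset.sum_congr rfl fun x _ => ?_
      rw [abs_mul, abs_of_nonneg (hd_nonneg x)]
  have hsum2 : (∑ s, ((∑ x : S × A, |dhat x - d x| * Phat x s) +
      ∑ x : S × A, d x * |Phat x s - P x s|)) ≤ Δ + ((1 - γ) / γ) * ε := by
    rw [Finset.sum_add_distrib]
    refine add_le_add ?_ ?_
    · rw [Finset.sum_comm]
      refine le_of_eq ?_
      rw [hΔ]
      refine Finset.sum_congr rfl fun x _ => ?_
      rw [← Finset.mul_sum, hPhat_sum x, mul_one]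
    · rw [Finset.sum_comm]
      calc ∑ x : S × A, ∑ s, d x * |Phat x s - P x s|
          = ∑ x : S × A, d x * ∑ s, |Phat x s - P x s| := by
            refine Finset.sum_congr rfl fun x _ => (Finset.mul_sum _ _ _).symm
        _ ≤ ∑ x : S × A, d x * (((1 - γ) / γ) * ε) := by
            refine Finset.sum_le_sum fun x _ =>
              mul_le_mul_of_nonneg_left (hrow x) (hd_nonneg x)
        _ = ((1 - γ) / γ) * ε := by rw [← Finset.sum_mul, hd_sum, one_mul]
  have hΔ_le : Δ ≤ γ * Δ + (1 - γ) * ε := by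
    have h1 : (∑ s, |E s|) ≤ Δ + ((1 - γ) / γ) * ε :=
      (Finset.sum_le_sum fun s _ => hstep2 s).trans hsum2
    calc Δ = γ * ∑ s, |E s| := hstep1
      _ ≤ γ * (Δ + ((1 - γ) / γ) * ε) := mul_le_mul_of_nonneg_left h1 hγ0.le
      _ = γ * Δ + (1 - γ) * ε := by field_simp
  have hΔ_nonneg : 0 ≤ Δ := Finset.sum_nonneg fun x _ => abs_nonneg _
  nlinarith [hΔ_le, hΔ_nonneg]
end

section
/- Let X be a nonempty finite type, let p, q be probability vectors on X with q x > 0 for all x, let γ ∈ (0,1), let R_max ≥ 0, and let R : X → ℝ satisfy 0 ≤ R(x) ≤ R_max for all x. Let X₁, …, X_N be independent X-valued random variables each distributed according to q, and define the importance sampling estimator Ĵ_IS = (1/((1−γ)N)) ∑_{n=1}^N w(X_n) R(X_n), where w(x) = p(x)/q(x). Then Var[Ĵ_IS] ≤ (R_max/(1−γ))² · D₂(p‖q)/N, where D₂(p‖q) = ∑ x, (p x)² / (q x) is the exponentiated 2-Rényi divergence. -/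
/-!
Put `f x = p x / q x * R x`, so that `Ĵ_IS = (1/((1-γ)N)) ∑ₙ f (Xₙ)`. Independence makes the
variance of the sum the sum of the `N` variances, and each of them is at most the second moment
`∑ₓ q x f(x)² = ∑ₓ p(x)² R(x)² / q x ≤ R_max² D₂(p‖q)`.
-/

open MeasureTheory ProbabilityTheory

theorem sum_mul_sq_importance_weight_le {X : Type*} [Fintype X] {p q R : X → ℝ} {Rmax : ℝ}
    (hq : ∀ x, 0 < q x) (hR_nonneg : ∀ x, 0 ≤ R x) (hR_le : ∀ x, R x ≤ Rmax) :
    ∑ x, q x * (p x / q x * R x) ^ 2 ≤ Rmax ^ 2 * ∑ x, p x ^ 2 / q x := by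
  rw [Finset.mul_sum]
  refine Finset.sum_le_sum fun x _ => ?_
  have hq_ne : q x ≠ 0 := (hq x).ne'
  calc q x * (p x / q x * R x) ^ 2 = p x ^ 2 / q x * R x ^ 2 := by field_simp
    _ ≤ p x ^ 2 / q x * Rmax ^ 2 := by
      have := hq x
      gcongr
      exacts [hR_nonneg x, hR_le x]
    _ = Rmax ^ 2 * (p x ^ 2 / q x) := mul_comm _ _

section FiniteLaw

variable {X Ω : Type*} [Fintype X] [MeasurableSpace X] [MeasurableSingletonClass X]
  [MeasurableSpace Ω] {Pr : Measure Ω} {q : X → ℝ}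

theorem integral_comp_eq_sum_of_law [IsFiniteMeasure Pr] {Y : Ω → X} (hY : Measurable Y)
    (hq : ∀ x, 0 ≤ q x) (hlaw : ∀ x, Pr (Y ⁻¹' {x}) = ENNReal.ofReal (q x)) (g : X → ℝ) :
    ∫ ω, g (Y ω) ∂Pr = ∑ x, q x * g x := by
  rw [← integral_map hY.aemeasurable (measurable_of_countable g).aestronglyMeasurable,
    integral_fintype Integrable.of_finite]
  refine Finset.sum_congr rfl fun x _ => ?_
  rw [measureReal_def, Measure.map_apply hY (measurableSet_singleton x), hlaw x,
    ENNReal.toReal_ofReal (hq x), smul_eq_mul]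

theorem variance_comp_le_sum_of_law [IsProbabilityMeasure Pr] {Y : Ω → X} (hY : Measurable Y)
    (hq : ∀ x, 0 ≤ q x) (hlaw : ∀ x, Pr (Y ⁻¹' {x}) = ENNReal.ofReal (q x)) (g : X → ℝ) :
    variance (fun ω => g (Y ω)) Pr ≤ ∑ x, q x * g x ^ 2 :=
  (variance_le_expectation_sq ((measurable_of_countable g).comp hY).aestronglyMeasurable).trans_eq
    (integral_comp_eq_sum_of_law hY hq hlaw (fun x => g x ^ 2))

theorem variance_sum_comp_of_iIndepFun [IsFiniteMeasure Pr] {ι : Type*} [Fintype ι]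
    {Xs : ι → Ω → X} (hmeas : ∀ n, Measurable (Xs n)) (hindep : iIndepFun Xs Pr) (g : X → ℝ) :
    variance (fun ω => ∑ n, g (Xs n ω)) Pr = ∑ n, variance (fun ω => g (Xs n ω)) Pr := by
  have hg : Measurable g := measurable_of_countable g
  have hmemLp : ∀ n ∈ Finset.univ, MemLp (fun ω => g (Xs n ω)) 2 Pr := fun n _ =>
    MemLp.of_bound (hg.comp (hmeas n)).aestronglyMeasurable (∑ x, ‖g x‖)
      (Filter.Eventually.of_forall fun ω =>
        Finset.single_le_sum (f := fun x => ‖g x‖) (fun x _ => norm_nonneg _)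
          (Finset.mem_univ (Xs n ω)))
  have hpairwise : (↑(Finset.univ : Finset ι) : Set ι).Pairwise
      fun i j => IndepFun (fun ω => g (Xs i ω)) (fun ω => g (Xs j ω)) Pr :=
    fun i _ j _ hij => (hindep.indepFun hij).comp hg hg
  simpa only [Finset.sum_fn] using IndepFun.variance_sum hmemLp hpairwise

theorem variance_sum_comp_le_of_iIndepFun [IsProbabilityMeasure Pr] {ι : Type*} [Fintype ι]
    {Xs : ι → Ω → X} (hmeas : ∀ n, Measurable (Xs n)) (hindep : iIndepFun Xs Pr)
    (hq : ∀ x, 0 ≤ q x) (hlaw : ∀ n x, Pr (Xs n ⁻¹' {x}) = ENNReal.ofReal (q x)) (g : X → ℝ) :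
    variance (fun ω => ∑ n, g (Xs n ω)) Pr ≤ Fintype.card ι * ∑ x, q x * g x ^ 2 := by
  rw [variance_sum_comp_of_iIndepFun hmeas hindep g, ← nsmul_eq_mul, ← Finset.card_univ,
    ← Finset.sum_const]
  exact Finset.sum_le_sum fun n _ => variance_comp_le_sum_of_law (hmeas n) hq (hlaw n) g

end FiniteLaw

theorem importance_sampling_variance_bound_general
    (X : Type*) [Fintype X] [MeasurableSpace X] [MeasurableSingletonClass X]
    (p q : X → ℝ)
    (hq_pos : ∀ x, 0 < q x)
    (γ : ℝ)
    (Rmax : ℝ)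
    (R : X → ℝ) (hR_nonneg : ∀ x, 0 ≤ R x) (hR_le : ∀ x, R x ≤ Rmax)
    (N : ℕ)
    (Ω : Type*) [MeasurableSpace Ω] (Pr : Measure Ω) [IsProbabilityMeasure Pr]
    (Xs : Fin N → Ω → X) (hmeas : ∀ n, Measurable (Xs n))
    (hindep : iIndepFun (m := fun _ => ‹MeasurableSpace X›) Xs Pr)
    (hlaw : ∀ n : Fin N, ∀ x : X, Pr (Xs n ⁻¹' {x}) = ENNReal.ofReal (q x)) :
    variance (fun ω =>
        (1 / ((1 - γ) * N)) * ∑ n : Fin N, (p (Xs n ω) / q (Xs n ω)) * R (Xs n ω)) Pr ≤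
      (Rmax / (1 - γ)) ^ 2 * (∑ x, (p x) ^ 2 / q x) / N := by
  have hvar_sum := variance_sum_comp_le_of_iIndepFun hmeas hindep (fun x => (hq_pos x).le) hlaw
    (fun x => p x / q x * R x)
  rw [Fintype.card_fin] at hvar_sum
  have hsecond_moment := sum_mul_sq_importance_weight_le (p := p) hq_pos hR_nonneg hR_le
  calc _ = (1 / ((1 - γ) * N)) ^ 2 *
        variance (fun ω => ∑ n : Fin N, (p (Xs n ω) / q (Xs n ω)) * R (Xs n ω)) Pr :=
        variance_const_mul _ _ _
    _ ≤ (1 / ((1 - γ) * N)) ^ 2 * (N * (Rmax ^ 2 * ∑ x, p x ^ 2 / q x)) := by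
        gcongr
        exact hvar_sum.trans (mul_le_mul_of_nonneg_left hsecond_moment N.cast_nonneg)
    -- `N / (N * N) = N⁻¹` holds even at `N = 0`, by `0⁻¹ = 0`.
    _ = (Rmax / (1 - γ)) ^ 2 * (∑ x, (p x) ^ 2 / q x) / N := by
        generalize 1 - γ = a
        linear_combination (Rmax ^ 2 * (∑ x, p x ^ 2 / q x) / a ^ 2) *
          div_self_mul_self' (N : ℝ)

/-- Variance bound for the importance sampling estimator: if `X₁, …, X_N` are i.i.d.
with law `q` on a finite type, `w x = p x / q x`, `0 ≤ R x ≤ R_max`, and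
`Ĵ_IS = (1/((1−γ)N)) ∑ₙ w(Xₙ) R(Xₙ)`, then
`Var[Ĵ_IS] ≤ (R_max/(1−γ))² · D₂(p‖q)/N`. -/
theorem importance_sampling_variance_bound
    (X : Type*) [Fintype X] [Nonempty X] [MeasurableSpace X] [MeasurableSingletonClass X]
    (p q : X → ℝ)
    (hp_nonneg : ∀ x, 0 ≤ p x) (hp_sum : ∑ x, p x = 1)
    (hq_pos : ∀ x, 0 < q x) (hq_sum : ∑ x, q x = 1)
    (γ : ℝ) (hγ0 : 0 < γ) (hγ1 : γ < 1)
    (Rmax : ℝ) (hRmax : 0 ≤ Rmax)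
    (R : X → ℝ) (hR_nonneg : ∀ x, 0 ≤ R x) (hR_le : ∀ x, R x ≤ Rmax)
    (N : ℕ) (hN : 1 ≤ N)
    (Ω : Type*) [MeasurableSpace Ω] (Pr : Measure Ω) [IsProbabilityMeasure Pr]
    (Xs : Fin N → Ω → X) (hmeas : ∀ n, Measurable (Xs n))
    (hindep : iIndepFun (m := fun _ => ‹MeasurableSpace X›) Xs Pr)
    (hlaw : ∀ n : Fin N, ∀ x : X, Pr (Xs n ⁻¹' {x}) = ENNReal.ofReal (q x)) :
    variance (fun ω =>
        (1 / ((1 - γ) * N)) * ∑ n : Fin N, (p (Xs n ω) / q (Xs n ω)) * R (Xs n ω)) Pr ≤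
      (Rmax / (1 - γ)) ^ 2 * (∑ x, (p x) ^ 2 / q x) / N :=
  importance_sampling_variance_bound_general X p q hq_pos γ Rmax R hR_nonneg hR_le N Ω Pr Xs hmeas
    hindep hlaw
end
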